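/- Equivalence of the information nonanticipative RDF and the nonanticipatory ε-entropy (Theorem 4): fix a probability measure P on ∏_{i=0}^n 𝒳_i (the source law), a measurable distortion function d : (∏𝒳_i) × (∏𝒴_i) → [0,∞], and D ≥ 0. For a joint probability measure μ on (∏𝒳_i) × (∏𝒴_i) with coordinate processes X^n, Y^n, write I(μ) for the Kullback–Leibler divergence of μ from the product of its two marginals (the mutual information I(X^n; Y^n)). Let 𝒬na(D) be the set of joint measures μ such that the ∏𝒳_i-marginal of μ equals P, ∫ d dμ ≤ (n+1)D, and for every i = 0,…,n−1, Y_i is conditionally independent of (X_{i+1},…,X_n) given (X_0,…,X_i, Y_0,…,Y_{i−1}) under μ. Let 𝒬ε(D) be the set of joint measures μ with the same marginal and distortion constraints such that for every i = 0,…,n−1, (X_{i+1},…,X_n) is conditionally independent of (Y_0,…,Y_i) given (X_0,…,X_i) under μ. Then 𝒬na(D) = 𝒬ε(D), and consequently the infimum of I(μ) over 𝒬na(D) equals the infimum of I(μ) over 𝒬ε(D); that is, R^{na}_{0,n}(D) = R^{ε}_{0,n}(D). -/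

import Mathlib

/-!
Write `𝓕ᵢ`, `𝓖ᵢ` for the σ-algebras of `X^i`, `Y^i` and `𝓗ᵢ` for that of `(X_{i+1},…,X_n)`.
A conditional independence `A ⫫ B | C` is equivalent to `P(a | C ∨ B) = P(a | C)` a.s. for all
events `a` of `A`, and in this form the semi-graphoid rules are the tower property (weak union)
and transitivity of a.e. equalities (contraction). The Markov constraint `𝓗ᵢ ⫫ 𝓖ᵢ | 𝓕ᵢ` yields the
causal one by weak union. Conversely, by induction on `i`: weak union turns
`𝓖_{i-1} ⫫ 𝓗_{i-1} | 𝓕_{i-1}` into `𝓖_{i-1} ⫫ 𝓗ᵢ | 𝓕ᵢ`, because `𝓕_{i-1} ∨ 𝓗_{i-1} = 𝓕ᵢ ∨ 𝓗ᵢ`,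
and contraction with the causal constraint `𝓗ᵢ ⫫ Y_i | 𝓕ᵢ ∨ 𝓖_{i-1}` gives `𝓗ᵢ ⫫ 𝓖ᵢ | 𝓕ᵢ`.
-/

open MeasureTheory ProbabilityTheory
open scoped NNReal ENNReal Classical

/-- Kullback–Leibler divergence of `μ` from `ν`: `∫ log(dμ/dν) dμ` when `μ ≪ ν` and the
log-likelihood ratio is `μ`-integrable, and `∞` otherwise. -/
noncomputable def klDivergence {α : Type*} [MeasurableSpace α] (μ ν : Measure α) : ℝ≥0∞ :=
  if μ ≪ ν ∧ Integrable (llr μ ν) μ then ENNReal.ofReal (∫ x, llr μ ν x ∂μ) else ∞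

/-- Mutual information `I(X^n; Y^n)` of a joint measure on a product space: the KL divergence
of the joint measure from the product of its two marginals. -/
noncomputable def mutualInfoProd {α β : Type*} [MeasurableSpace α] [MeasurableSpace β]
    (μ : Measure (α × β)) : ℝ≥0∞ :=
  klDivergence μ ((μ.map Prod.fst).prod (μ.map Prod.snd))

open MeasurableSpace

theorem Set.mul_indicator_one {α : Type*} (s : Set α) (f : α → ℝ) :
    f * s.indicator (fun _ => 1) = s.indicator f := by
  ext x
  by_cases hx : x ∈ s <;> simp [hx]

theorem Fin.range_mk_add_one_add {n i : ℕ} (h : ∀ j : Fin (n - i), i + 1 + ↑j < n + 1) :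
    Set.range (fun j : Fin (n - i) => (⟨i + 1 + ↑j, h j⟩ : Fin (n + 1)))
      = {k : Fin (n + 1) | i < ↑k} := by
  ext k
  refine ⟨?_, fun hk => ⟨⟨↑k - (i + 1), by simp only [Set.mem_ofPred_eq] at hk; omega⟩, ?_⟩⟩
  · rintro ⟨j, rfl⟩
    simp only [Set.mem_ofPred_eq]
    omega
  · ext
    simp only [Set.mem_ofPred_eq] at hk ⊢
    omega

namespace MeasurableSpace

theorem sup_eq_generateFrom_image2_inter {Ω : Type*} (m₁ m₂ : MeasurableSpace Ω) :
    m₁ ⊔ m₂ = generateFrom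
      (Set.image2 (· ∩ ·) {s | MeasurableSet[m₁] s} {s | MeasurableSet[m₂] s}) := by
  refine le_antisymm (sup_le ?_ ?_) (generateFrom_le ?_)
  · exact fun s hs =>
      measurableSet_generateFrom ⟨s, hs, Set.univ, MeasurableSet.univ, Set.inter_univ s⟩
  · exact fun s hs =>
      measurableSet_generateFrom ⟨Set.univ, MeasurableSet.univ, s, hs, Set.univ_inter s⟩
  · rintro _ ⟨a, ha, b, hb, rfl⟩
    exact (le_sup_left (a := m₁) a ha).inter (le_sup_right (b := m₂) b hb)

theorem isPiSystem_image2_measurableSet_inter {Ω : Type*} (m₁ m₂ : MeasurableSpace Ω) :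
    IsPiSystem (Set.image2 (· ∩ ·) {s | MeasurableSet[m₁] s} {s | MeasurableSet[m₂] s}) := by
  rintro _ ⟨a, ha, b, hb, rfl⟩ _ ⟨c, hc, d, hd, rfl⟩ -
  exact ⟨a ∩ c, ha.inter hc, b ∩ d, hb.inter hd, Set.inter_inter_inter_comm a c b d⟩

theorem comap_process_comp_eq_biSup_range {Ω ι κ : Type*} {β : ι → Type*}
    [∀ i, MeasurableSpace (β i)] (X : ∀ i, Ω → β i) (e : κ → ι) :
    MeasurableSpace.comap (fun ω j => X (e j) ω) inferInstance
      = ⨆ i ∈ Set.range e, MeasurableSpace.comap (X i) inferInstance := by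
  rw [comap_process_pi (fun j => X (e j)), iSup_range]

section Filtrations

variable {Ω : Type*} {n : ℕ} (X : Fin (n + 1) → MeasurableSpace Ω)

abbrev sigmaBefore (i : ℕ) : MeasurableSpace Ω := ⨆ k ∈ {k : Fin (n + 1) | ↑k < i}, X k

abbrev sigmaAfter (i : ℕ) : MeasurableSpace Ω := ⨆ k ∈ {k : Fin (n + 1) | i < ↑k}, X k

variable {X}

theorem sigmaBefore_le {mΩ : MeasurableSpace Ω} (hX : ∀ k, X k ≤ mΩ) (i : ℕ) :
    sigmaBefore X i ≤ mΩ :=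
  iSup₂_le fun k _ => hX k

theorem sigmaAfter_le {mΩ : MeasurableSpace Ω} (hX : ∀ k, X k ≤ mΩ) (i : ℕ) :
    sigmaAfter X i ≤ mΩ :=
  iSup₂_le fun k _ => hX k

@[simp]
theorem sigmaBefore_zero : sigmaBefore X 0 = ⊥ := by
  simp [sigmaBefore]

theorem sigmaBefore_add_one {i : ℕ} (hi : i < n + 1) :
    sigmaBefore X (i + 1) = sigmaBefore X i ⊔ X ⟨i, hi⟩ := by
  have hS : {k : Fin (n + 1) | ↑k < i + 1} = {k : Fin (n + 1) | ↑k < i} ∪ {⟨i, hi⟩} := by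
    ext k
    simp only [Set.mem_union, Set.mem_ofPred_eq, Set.mem_singleton_iff, Fin.ext_iff]
    omega
  rw [sigmaBefore, hS, iSup_union, iSup_singleton, sigmaBefore]

theorem sigmaBefore_mono : Monotone (sigmaBefore X) := fun _ _ hij =>
  biSup_mono fun _ hk => lt_of_lt_of_le hk hij

theorem sigmaBefore_sup_sigmaAfter_le (i : ℕ) :
    sigmaBefore X (i + 2) ⊔ sigmaAfter X (i + 1) ≤ sigmaBefore X (i + 1) ⊔ sigmaAfter X i := by
  rw [sigmaBefore, sigmaAfter, sigmaBefore, sigmaAfter, ← iSup_union, ← iSup_union]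
  exact biSup_mono fun k hk => by simp only [Set.mem_union, Set.mem_ofPred_eq] at hk ⊢; omega

end Filtrations

theorem comap_prefix_eq_sigmaBefore {Ω : Type*} {n : ℕ} {β : Fin (n + 1) → Type*}
    [∀ k, MeasurableSpace (β k)] (X : ∀ k, Ω → β k) (i : ℕ) (h : i ≤ n + 1) :
    MeasurableSpace.comap (fun ω (j : Fin i) => X (Fin.castLE h j) ω) inferInstance
      = sigmaBefore (fun k => MeasurableSpace.comap (X k) inferInstance) i := by
  rw [comap_process_comp_eq_biSup_range, Fin.range_castLE, sigmaBefore]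

theorem comap_suffix_eq_sigmaAfter {Ω : Type*} {n : ℕ} {β : Fin (n + 1) → Type*}
    [∀ k, MeasurableSpace (β k)] (X : ∀ k, Ω → β k) (i : ℕ)
    (h : ∀ j : Fin (n - i), i + 1 + ↑j < n + 1) :
    MeasurableSpace.comap (fun ω (j : Fin (n - i)) => X ⟨i + 1 + ↑j, h j⟩ ω) inferInstance
      = sigmaAfter (fun k => MeasurableSpace.comap (X k) inferInstance) i := by
  rw [comap_process_comp_eq_biSup_range, Fin.range_mk_add_one_add, sigmaAfter]

end MeasurableSpace

namespace MeasureTheory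

theorem setIntegral_eq_setIntegral_of_isPiSystem {Ω : Type*} {m m₀ : MeasurableSpace Ω}
    {μ : Measure Ω} {C : Set (Set Ω)} {f g : Ω → ℝ} (hm : m ≤ m₀)
    (h_eq : m = generateFrom C) (h_inter : IsPiSystem C)
    (hf : Integrable f μ) (hg : Integrable g μ)
    (basic : ∀ s ∈ C, ∫ x in s, f x ∂μ = ∫ x in s, g x ∂μ)
    (h_univ : ∫ x, f x ∂μ = ∫ x, g x ∂μ) :
    ∀ s, MeasurableSet[m] s → ∫ x in s, f x ∂μ = ∫ x in s, g x ∂μ := by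
  refine induction_on_inter h_eq h_inter (by simp) basic ?_ ?_
  · intro s hs h
    have hf_compl := integral_add_compl (hm s hs) hf
    have hg_compl := integral_add_compl (hm s hs) hg
    linarith
  · intro s hdisj hs h
    have hs₀ i := hm _ (hs i)
    rw [integral_iUnion hs₀ hdisj hf.integrableOn, integral_iUnion hs₀ hdisj hg.integrableOn]
    exact tsum_congr h

theorem condExp_ae_eq_of_le_of_le {Ω : Type*} {m₁ m₂ m₃ mΩ : MeasurableSpace Ω}
    {μ : Measure Ω} [IsFiniteMeasure μ] {f : Ω → ℝ} (h₁₂ : m₁ ≤ m₂) (h₂₃ : m₂ ≤ m₃)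
    (h₃ : m₃ ≤ mΩ) (h : μ[f | m₃] =ᵐ[μ] μ[f | m₁]) :
    μ[f | m₂] =ᵐ[μ] μ[f | m₁] :=
  calc μ[f | m₂] =ᵐ[μ] μ[μ[f | m₃] | m₂] := (condExp_condExp_of_le h₂₃ h₃).symm
    _ =ᵐ[μ] μ[μ[f | m₁] | m₂] := condExp_congr_ae h
    _ = μ[f | m₁] := condExp_of_stronglyMeasurable (h₂₃.trans h₃)
        (stronglyMeasurable_condExp.mono h₁₂) integrable_condExp

end MeasureTheory

namespace ProbabilityTheory

variable {Ω : Type*} {m' m₁ m₂ mΩ : MeasurableSpace Ω} [StandardBorelSpace Ω]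
  {μ : Measure Ω} [IsFiniteMeasure μ] {t : Set Ω}

theorem CondIndep.setIntegral_condExp_indicator_inter {hm' : m' ≤ mΩ}
    (h : CondIndep m' m₁ m₂ hm' μ) (hm₁ : m₁ ≤ mΩ) (hm₂ : m₂ ≤ mΩ) (ht : MeasurableSet[m₁] t)
    {a b : Set Ω} (ha : MeasurableSet[m'] a) (hb : MeasurableSet[m₂] b) :
    ∫ x in a ∩ b, (μ⟦t | m'⟧) x ∂μ = ∫ x in a ∩ b, t.indicator (fun _ => (1 : ℝ)) x ∂μ := by
  have hb₀ := hm₂ b hb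
  have hprod : μ⟦t ∩ b | m'⟧ =ᵐ[μ] μ⟦t | m'⟧ * μ⟦b | m'⟧ :=
    (condIndep_iff m' m₁ m₂ hm' hm₁ hm₂ μ).mp h t b ht hb
  have hint : Integrable (μ⟦t | m'⟧ * b.indicator (fun _ => 1)) μ := by
    rw [Set.mul_indicator_one]; exact integrable_condExp.indicator hb₀
  have hpull : μ[μ⟦t | m'⟧ * b.indicator (fun _ => 1) | m'] =ᵐ[μ] μ⟦t | m'⟧ * μ⟦b | m'⟧ :=
    condExp_mul_of_stronglyMeasurable_left stronglyMeasurable_condExp hint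
      ((integrable_const 1).indicator hb₀)
  calc ∫ x in a ∩ b, (μ⟦t | m'⟧) x ∂μ
      = ∫ x in a, (μ⟦t | m'⟧ * b.indicator (fun _ => 1) : Ω → ℝ) x ∂μ := by
        rw [Set.mul_indicator_one, setIntegral_indicator hb₀]
    _ = ∫ x in a, (μ[μ⟦t | m'⟧ * b.indicator (fun _ => 1) | m']) x ∂μ :=
        (setIntegral_condExp hm' hint ha).symm
    _ = ∫ x in a, (μ⟦t ∩ b | m'⟧) x ∂μ :=
        setIntegral_congr_ae (hm' a ha) ((hpull.trans hprod.symm).mono fun x hx _ => hx)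
    _ = ∫ x in a, (t ∩ b).indicator (fun _ => (1 : ℝ)) x ∂μ :=
        setIntegral_condExp hm' ((integrable_const 1).indicator ((hm₁ t ht).inter hb₀)) ha
    _ = ∫ x in a ∩ b, t.indicator (fun _ => (1 : ℝ)) x ∂μ := by
        rw [Set.inter_comm t, ← Set.indicator_indicator, setIntegral_indicator hb₀]

theorem CondIndep.condExp_indicator_sup_ae_eq {hm' : m' ≤ mΩ}
    (h : CondIndep m' m₁ m₂ hm' μ) (hm₁ : m₁ ≤ mΩ) (hm₂ : m₂ ≤ mΩ) (ht : MeasurableSet[m₁] t) :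
    μ⟦t | m' ⊔ m₂⟧ =ᵐ[μ] μ⟦t | m'⟧ := by
  have hsup : m' ⊔ m₂ ≤ mΩ := sup_le hm' hm₂
  have hint : Integrable (t.indicator fun _ => (1 : ℝ)) μ :=
    (integrable_const 1).indicator (hm₁ t ht)
  refine (ae_eq_condExp_of_forall_setIntegral_eq hsup hint
    (fun s _ _ => integrable_condExp.integrableOn) (fun s hs _ => ?_)
    ((stronglyMeasurable_condExp (m := m')).mono
      (le_sup_left : m' ≤ m' ⊔ m₂)).aestronglyMeasurable).symm
  refine setIntegral_eq_setIntegral_of_isPiSystem hsup (sup_eq_generateFrom_image2_inter m' m₂)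
    (isPiSystem_image2_measurableSet_inter m' m₂) integrable_condExp hint ?_
    (integral_condExp hm') s hs
  rintro _ ⟨a, ha, b, hb, rfl⟩
  exact h.setIntegral_condExp_indicator_inter hm₁ hm₂ ht ha hb

theorem condIndep_of_forall_condExp_indicator_sup_ae_eq (hm' : m' ≤ mΩ) (hm₁ : m₁ ≤ mΩ)
    (hm₂ : m₂ ≤ mΩ) (h : ∀ t, MeasurableSet[m₁] t → μ⟦t | m' ⊔ m₂⟧ =ᵐ[μ] μ⟦t | m'⟧) :
    CondIndep m' m₁ m₂ hm' μ := by
  refine (condIndep_iff m' m₁ m₂ hm' hm₁ hm₂ μ).mpr fun t₁ t₂ ht₁ ht₂ => ?_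
  have hsup : m' ⊔ m₂ ≤ mΩ := sup_le hm' hm₂
  set f : Ω → ℝ := t₁.indicator fun _ => 1
  set g : Ω → ℝ := t₂.indicator fun _ => 1
  have hf : Integrable f μ := (integrable_const 1).indicator (hm₁ t₁ ht₁)
  have hg : Integrable g μ := (integrable_const 1).indicator (hm₂ t₂ ht₂)
  have hg_sup : StronglyMeasurable[m' ⊔ m₂] g :=
    stronglyMeasurable_const.indicator ((le_sup_right : m₂ ≤ m' ⊔ m₂) t₂ ht₂)
  have hgf : Integrable (g * f) μ := by
    rw [mul_comm, Set.mul_indicator_one]; exact hf.indicator (hm₂ t₂ ht₂)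
  have hfg' : Integrable (μ[f | m'] * g) μ := by
    rw [Set.mul_indicator_one]; exact integrable_condExp.indicator (hm₂ t₂ ht₂)
  calc μ⟦t₁ ∩ t₂ | m'⟧ = μ[g * f | m'] := by
        rw [mul_comm, Set.mul_indicator_one, Set.indicator_indicator, Set.inter_comm]
    _ =ᵐ[μ] μ[μ[g * f | m' ⊔ m₂] | m'] := (condExp_condExp_of_le le_sup_left hsup).symm
    _ =ᵐ[μ] μ[g * μ[f | m'] | m'] := condExp_congr_ae <|
        (condExp_mul_of_stronglyMeasurable_left hg_sup hgf hf).trans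
          (Filter.EventuallyEq.rfl.mul (h t₁ ht₁))
    _ =ᵐ[μ] μ[f | m'] * μ[g | m'] := by
        rw [mul_comm]
        exact condExp_mul_of_stronglyMeasurable_left stronglyMeasurable_condExp hfg' hg

theorem condIndep_iff_forall_condExp_indicator_sup_ae_eq (hm' : m' ≤ mΩ) (hm₁ : m₁ ≤ mΩ)
    (hm₂ : m₂ ≤ mΩ) :
    CondIndep m' m₁ m₂ hm' μ ↔ ∀ t, MeasurableSet[m₁] t → μ⟦t | m' ⊔ m₂⟧ =ᵐ[μ] μ⟦t | m'⟧ :=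
  ⟨fun h _ ht => h.condExp_indicator_sup_ae_eq hm₁ hm₂ ht,
    condIndep_of_forall_condExp_indicator_sup_ae_eq hm' hm₁ hm₂⟩

theorem condIndep_congr {m'' m₁' m₂' : MeasurableSpace Ω} {hm' : m' ≤ mΩ} {hm'' : m'' ≤ mΩ}
    (h' : m' = m'') (h₁ : m₁ = m₁') (h₂ : m₂ = m₂') :
    CondIndep m' m₁ m₂ hm' μ ↔ CondIndep m'' m₁' m₂' hm'' μ := by
  subst h' h₁ h₂; rfl

/-- The weak-union and decomposition rules of conditional independence. -/
theorem CondIndep.of_le_of_sup_le {m'' m₂' : MeasurableSpace Ω} {hm' : m' ≤ mΩ}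
    (h : CondIndep m' m₁ m₂ hm' μ) (hm₁ : m₁ ≤ mΩ) (hm₂ : m₂ ≤ mΩ) (hm'' : m'' ≤ mΩ)
    (hle : m' ≤ m'') (hsup : m'' ⊔ m₂' ≤ m' ⊔ m₂) : CondIndep m'' m₁ m₂' hm'' μ := by
  have hsup₀ : m' ⊔ m₂ ≤ mΩ := sup_le hm' hm₂
  rw [condIndep_iff_forall_condExp_indicator_sup_ae_eq hm' hm₁ hm₂] at h
  rw [condIndep_iff_forall_condExp_indicator_sup_ae_eq hm'' hm₁
    (le_sup_right.trans (hsup.trans hsup₀))]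
  intro t ht
  exact (condExp_ae_eq_of_le_of_le (hle.trans le_sup_left) hsup hsup₀ (h t ht)).trans
    (condExp_ae_eq_of_le_of_le hle (le_sup_left.trans hsup) hsup₀ (h t ht)).symm

/-- The contraction rule of conditional independence. -/
theorem CondIndep.sup_right {m₃ : MeasurableSpace Ω} {hm' : m' ≤ mΩ} {hm'₂ : m' ⊔ m₂ ≤ mΩ}
    (h₂ : CondIndep m' m₁ m₂ hm' μ) (h₃ : CondIndep (m' ⊔ m₂) m₁ m₃ hm'₂ μ) (hm₁ : m₁ ≤ mΩ)
    (hm₂ : m₂ ≤ mΩ) (hm₃ : m₃ ≤ mΩ) : CondIndep m' m₁ (m₂ ⊔ m₃) hm' μ := by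
  rw [condIndep_iff_forall_condExp_indicator_sup_ae_eq hm' hm₁ hm₂] at h₂
  rw [condIndep_iff_forall_condExp_indicator_sup_ae_eq hm'₂ hm₁ hm₃] at h₃
  rw [condIndep_iff_forall_condExp_indicator_sup_ae_eq hm' hm₁ (sup_le hm₂ hm₃)]
  intro t ht
  rw [← sup_assoc]
  exact (h₃ t ht).trans (h₂ t ht)

section CausalMarkov

variable {n : ℕ} {X Y : Fin (n + 1) → MeasurableSpace Ω}

theorem CondIndep.sigmaBefore_add_one_of_causal (hX : ∀ k, X k ≤ mΩ) (hY : ∀ k, Y k ≤ mΩ)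
    {i : ℕ} (hi : i < n)
    (hpast : CondIndep (sigmaBefore X (i + 1)) (sigmaAfter X i) (sigmaBefore Y i)
      (sigmaBefore_le hX _) μ)
    (hcausal : CondIndep (sigmaBefore X (i + 1) ⊔ sigmaBefore Y i) (Y ⟨i, hi.trans n.lt_succ_self⟩)
      (sigmaAfter X i) (sup_le (sigmaBefore_le hX _) (sigmaBefore_le hY _)) μ) :
    CondIndep (sigmaBefore X (i + 1)) (sigmaAfter X i) (sigmaBefore Y (i + 1))
      (sigmaBefore_le hX _) μ := by
  rw [sigmaBefore_add_one (X := Y) (by omega)]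
  exact hpast.sup_right hcausal.symm (sigmaAfter_le hX _) (sigmaBefore_le hY _) (hY _)

theorem condIndep_causal_iff_markov (hX : ∀ k, X k ≤ mΩ) (hY : ∀ k, Y k ≤ mΩ) :
    (∀ i (hi : i < n), CondIndep (sigmaBefore X (i + 1) ⊔ sigmaBefore Y i)
      (Y ⟨i, hi.trans n.lt_succ_self⟩) (sigmaAfter X i)
      (sup_le (sigmaBefore_le hX _) (sigmaBefore_le hY _)) μ) ↔
    (∀ i < n, CondIndep (sigmaBefore X (i + 1)) (sigmaAfter X i) (sigmaBefore Y (i + 1))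
      (sigmaBefore_le hX _) μ) := by
  constructor
  · intro hcausal i hi
    induction i with
    | zero =>
      refine .sigmaBefore_add_one_of_causal hX hY hi ?_ (hcausal 0 hi)
      rw [sigmaBefore_zero]
      exact condIndep_bot_right _
    | succ j ih =>
      refine .sigmaBefore_add_one_of_causal hX hY hi ?_ (hcausal (j + 1) hi)
      exact ((ih (by omega)).symm.of_le_of_sup_le (sigmaBefore_le hY _) (sigmaAfter_le hX _)
        (sigmaBefore_le hX _) (sigmaBefore_mono (by omega))
        (sigmaBefore_sup_sigmaAfter_le j)).symm
  · intro hmarkov i hi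
    refine ((hmarkov i hi).of_le_of_sup_le (sigmaAfter_le hX _) (sigmaBefore_le hY _)
      (sup_le (sigmaBefore_le hX _) (sigmaBefore_le hY _)) le_sup_left ?_).symm
    rw [sup_assoc, ← sigmaBefore_add_one (X := Y) (by omega)]

end CausalMarkov

end ProbabilityTheory

/-- **Equivalence of the information nonanticipative RDF and the nonanticipatory ε-entropy**
(Theorem 4): the set `𝒬na(D)` of joint measures with source marginal `P`, average distortion
at most `D`, and causal constraint `Y_i ⫫ (X_{i+1},…,X_n) | (X^i, Y^{i-1})` for all `i < n`,
coincides with the set `𝒬ε(D)` where the constraint is replaced by the Markov-chain constraint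
`(X_{i+1},…,X_n) ⫫ (Y_0,…,Y_i) | (X_0,…,X_i)` for all `i < n`; consequently
`R^{na}_{0,n}(D) = R^{ε}_{0,n}(D)`. -/
theorem nonanticipativeRDF_eq_nonanticipatory_epsilon_entropy
    {n : ℕ} (𝒳 𝒴 : Fin (n + 1) → Type*)
    [∀ j, MeasurableSpace (𝒳 j)] [∀ j, StandardBorelSpace (𝒳 j)]
    [∀ j, MeasurableSpace (𝒴 j)] [∀ j, StandardBorelSpace (𝒴 j)]
    (Psrc : Measure ((j : Fin (n + 1)) → 𝒳 j))
    (d : (((j : Fin (n + 1)) → 𝒳 j) × ((j : Fin (n + 1)) → 𝒴 j)) → ℝ≥0∞)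
    (D : ℝ)
    (Qna Qe : Set (ProbabilityMeasure
      (((j : Fin (n + 1)) → 𝒳 j) × ((j : Fin (n + 1)) → 𝒴 j))))
    -- `𝒬na(D)` : fixed source marginal, average distortion at most `D`, and
    -- `Y_i ⫫ (X_{i+1},…,X_n) | (X^i, Y^{i-1})` for all `i < n`.
    (hQna : Qna = {μ | μ.toMeasure.map Prod.fst = Psrc ∧
        (∫⁻ z, d z ∂μ.toMeasure) ≤ ENNReal.ofReal ((n + 1) * D) ∧
        ∀ i : ℕ, ∀ hi : i < n,
          CondIndepFun
            (MeasurableSpace.comap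
              (fun ω : ((j : Fin (n + 1)) → 𝒳 j) × ((j : Fin (n + 1)) → 𝒴 j) =>
                ((fun j : Fin (i + 1) => ω.1 (Fin.castLE (by omega) j)),
                 (fun j : Fin i => ω.2 (Fin.castLE (by omega) j)))) inferInstance)
            ((Measurable.prodMk
                (measurable_pi_lambda _ fun j : Fin (i + 1) =>
                  (measurable_pi_apply _).comp measurable_fst)
                (measurable_pi_lambda _ fun j : Fin i =>
                  (measurable_pi_apply _).comp measurable_snd)).comap_le)
            (fun ω => ω.2 ⟨i, by omega⟩)
            (fun ω => fun j : Fin (n - i) => ω.1 ⟨i + 1 + j.1, by have := j.isLt; omega⟩)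
            μ.toMeasure})
    -- `𝒬ε(D)` : same marginal and distortion constraints, with the Markov-chain constraint
    -- `(X_{i+1},…,X_n) ⫫ (Y_0,…,Y_i) | (X_0,…,X_i)` for all `i < n`.
    (hQe : Qe = {μ | μ.toMeasure.map Prod.fst = Psrc ∧
        (∫⁻ z, d z ∂μ.toMeasure) ≤ ENNReal.ofReal ((n + 1) * D) ∧
        ∀ i : ℕ, ∀ hi : i < n,
          CondIndepFun
            (MeasurableSpace.comap
              (fun ω : ((j : Fin (n + 1)) → 𝒳 j) × ((j : Fin (n + 1)) → 𝒴 j) =>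
                fun j : Fin (i + 1) => ω.1 (Fin.castLE (by omega) j)) inferInstance)
            ((measurable_pi_lambda _ fun j : Fin (i + 1) =>
                (measurable_pi_apply _).comp measurable_fst).comap_le)
            (fun ω => fun j : Fin (n - i) => ω.1 ⟨i + 1 + j.1, by have := j.isLt; omega⟩)
            (fun ω => fun j : Fin (i + 1) => ω.2 (Fin.castLE (by omega) j))
            μ.toMeasure}) :
    Qna = Qe ∧
      (⨅ μ ∈ Qna, mutualInfoProd μ.toMeasure) =
        ⨅ μ ∈ Qe, mutualInfoProd μ.toMeasure := by
  have hset : Qna = Qe := by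
    rw [hQna, hQe]
    ext μ
    refine and_congr_right' (and_congr_right' ?_)
    have hXpast := comap_prefix_eq_sigmaBefore (fun k (ω : (∀ j, 𝒳 j) × ∀ j, 𝒴 j) => ω.1 k)
    have hYpast := comap_prefix_eq_sigmaBefore (fun k (ω : (∀ j, 𝒳 j) × ∀ j, 𝒴 j) => ω.2 k)
    have hXfuture := comap_suffix_eq_sigmaAfter (fun k (ω : (∀ j, 𝒳 j) × ∀ j, 𝒴 j) => ω.1 k)
    refine (forall₂_congr fun i hi => ?_).trans
      ((condIndep_causal_iff_markov (μ := μ.toMeasure)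
        (fun k => ((measurable_pi_apply k).comp measurable_fst).comap_le)
        (fun k => ((measurable_pi_apply k).comp measurable_snd).comap_le)).trans
        (forall₂_congr fun i hi => ?_))
    · rw [condIndepFun_iff_condIndep]
      exact condIndep_congr
        ((comap_prodMk _ _).trans (congr_arg₂ (· ⊔ ·) (hXpast _ _) (hYpast _ _))) rfl (hXfuture _ _)
    · rw [condIndepFun_iff_condIndep]
      exact condIndep_congr (hXpast _ _).symm (hXfuture _ _).symm (hYpast _ _).symm
  exact ⟨hset, by rw [hset]⟩
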